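/- Let μ be a positive finite measure on ℝ. The linear span of the functions t ↦ 1/(t − conj w), as w ranges over ℂ \ ℝ, is dense in L²(μ). -/

import Mathlib

/-!
On the one-point compactification `ℝ ∪ {∞}` the Cauchy kernels `k_z t = (t - z)⁻¹`, `z ∉ ℝ`, are
continuous and vanish at `∞`. The partial fraction identity `k_z k_z' = (k_z - k_z') / (z - z')`
and the limit `k_z ^ 2 = lim_{δ → 0} k_z k_{z + δ}` make their uniformly closed span a closed
non-unital star subalgebra; adjoining the constants gives a point-separating star subalgebra, so by
Stone–Weierstrass the closed span contains every continuous function vanishing at `∞`. These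
include the compactly supported continuous functions on `ℝ`, which are dense in `L²(μ)`, and
uniform convergence implies convergence in `L²(μ)` because `μ` is finite.
-/

open MeasureTheory Complex Filter Topology Submodule OnePoint
open scoped Pointwise BoundedContinuousFunction

theorem Submodule.mul_mem_topologicalClosure_span {R A : Type*} [CommSemiring R] [Semiring A]
    [Algebra R A] [TopologicalSpace A] [IsTopologicalSemiring A] [ContinuousConstSMul R A]
    {s : Set A} (hs : ∀ x ∈ s, ∀ y ∈ s, x * y ∈ (span R s).topologicalClosure) {a b : A}
    (ha : a ∈ (span R s).topologicalClosure) (hb : b ∈ (span R s).topologicalClosure) :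
    a * b ∈ (span R s).topologicalClosure := by
  rw [← SetLike.mem_coe, topologicalClosure_coe, ← closure_closure]
  refine map_mem_closure₂ continuous_mul ha hb fun x hx y hy => ?_
  have hxy : x * y ∈ span R (s * s) := span_mul_span R s s ▸ mul_mem_mul hx hy
  exact span_le.2 (Set.mul_subset_iff.2 hs) hxy

theorem Submodule.star_mem_topologicalClosure_span {R A : Type*} [CommSemiring R] [StarRing R]
    [AddCommMonoid A] [StarAddMonoid A] [Module R A] [StarModule R A] [TopologicalSpace A]
    [ContinuousAdd A] [ContinuousConstSMul R A] [ContinuousStar A] {s : Set A}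
    (hs : ∀ x ∈ s, star x ∈ s) {a : A} (ha : a ∈ (span R s).topologicalClosure) :
    star a ∈ (span R s).topologicalClosure := by
  refine map_mem_closure continuous_star ha fun x hx => ?_
  induction hx using span_induction with
  | mem y hy => exact subset_span (hs y hy)
  | zero => simp
  | add y z _ _ hy hz => simpa using add_mem hy hz
  | smul c y _ hy => simpa using smul_mem _ (star c) hy

theorem ContinuousMap.mem_closure_of_apply_eq_zero {X 𝕜 : Type*} [TopologicalSpace X]
    [CompactSpace X] [RCLike 𝕜] (S : NonUnitalStarSubalgebra 𝕜 C(X, 𝕜)) (x₀ : X)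
    (hS : ∀ f ∈ S, f x₀ = 0)
    (hsep : (StarAlgebra.adjoin 𝕜 (S : Set C(X, 𝕜))).SeparatesPoints)
    {g : C(X, 𝕜)} (hg : g x₀ = 0) : g ∈ closure (S : Set C(X, 𝕜)) := by
  set A := StarAlgebra.adjoin 𝕜 (S : Set C(X, 𝕜))
  set φ := ContinuousMap.evalStarAlgHom 𝕜 𝕜 x₀
  have hA : closure (A : Set C(X, 𝕜)) = Set.univ := by
    rw [← StarSubalgebra.topologicalClosure_coe,
      starSubalgebra_topologicalClosure_eq_top_of_separatesPoints A hsep, StarSubalgebra.coe_top]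
  have hAS : (A : Set C(X, 𝕜)) ∩ RingHom.ker φ ⊆ S := by
    rintro a ⟨haA, haφ⟩
    rw [SetLike.mem_coe, ← StarSubalgebra.mem_toSubalgebra, ← Subalgebra.mem_toSubmodule,
      StarAlgebra.adjoin_nonUnitalStarSubalgebra_eq_span] at haA
    obtain ⟨_, hc, f, hf, rfl⟩ := mem_sup.1 haA
    obtain ⟨c, rfl⟩ := mem_span_singleton.1 hc
    have hc0 : c = 0 := by simpa [φ, hS f hf] using haφ
    simpa [hc0] using hf
  have hg' : g ∈ closure ((A : Set C(X, 𝕜)) ∩ RingHom.ker φ) := by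
    rw [AlgHom.closure_ker_inter φ (continuous_eval_const x₀) A, hA]
    exact ⟨trivial, hg⟩
  exact closure_mono hAS hg'

lemma Complex.ofReal_sub_ne_zero {z : ℂ} (hz : z.im ≠ 0) (t : ℝ) : (t : ℂ) - z ≠ 0 :=
  fun h => hz (by simpa using congrArg im h)

lemma Complex.norm_inv_ofReal_sub_le {z : ℂ} (hz : z.im ≠ 0) (t : ℝ) :
    ‖((t : ℂ) - z)⁻¹‖ ≤ |z.im|⁻¹ := by
  rw [norm_inv]
  refine inv_anti₀ (abs_pos.2 hz) ?_
  simpa using abs_im_le_norm ((t : ℂ) - z)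

lemma Complex.tendsto_inv_ofReal_sub_cocompact (z : ℂ) :
    Tendsto (fun t : ℝ => ((t : ℂ) - z)⁻¹) (cocompact ℝ) (𝓝 0) := by
  refine tendsto_inv₀_cobounded.comp (tendsto_norm_atTop_iff_cobounded.1 ?_)
  refine tendsto_atTop_mono (fun t => ?_)
    (tendsto_atTop_add_const_right _ (-‖z‖) tendsto_norm_cocompact_atTop)
  simpa [sub_eq_add_neg] using norm_sub_norm_le (t : ℂ) z

noncomputable def cauchyKernel (z : ℂ) (hz : z.im ≠ 0) : C(OnePoint ℝ, ℂ) :=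
  OnePoint.continuousMapMk
    ⟨fun t : ℝ => ((t : ℂ) - z)⁻¹,
      (continuous_ofReal.sub continuous_const).inv₀ (ofReal_sub_ne_zero hz)⟩
    0 (coclosedCompact_eq_cocompact (X := ℝ) ▸ tendsto_inv_ofReal_sub_cocompact z)

@[simp] lemma cauchyKernel_coe (z : ℂ) (hz : z.im ≠ 0) (t : ℝ) :
    cauchyKernel z hz t = ((t : ℂ) - z)⁻¹ := rfl

@[simp] lemma cauchyKernel_infty (z : ℂ) (hz : z.im ≠ 0) : cauchyKernel z hz ∞ = 0 := rfl

lemma cauchyKernel_injective (z : ℂ) (hz : z.im ≠ 0) :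
    Function.Injective (cauchyKernel z hz) := by
  have hne (t : ℝ) : cauchyKernel z hz t ≠ 0 := by simpa using ofReal_sub_ne_zero hz t
  intro x y hxy
  induction x using OnePoint.rec <;> induction y using OnePoint.rec
  · rfl
  · exact absurd hxy.symm (hne _)
  · exact absurd hxy (hne _)
  · simpa using hxy

lemma cauchyKernel_mul_cauchyKernel {z z' : ℂ} (hz : z.im ≠ 0) (hz' : z'.im ≠ 0)
    (hzz' : z ≠ z') :
    cauchyKernel z hz * cauchyKernel z' hz' =
      (z - z')⁻¹ • (cauchyKernel z hz - cauchyKernel z' hz') := by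
  ext x
  induction x using OnePoint.rec with
  | infty => simp
  | coe t =>
    have := ofReal_sub_ne_zero hz t
    have := ofReal_sub_ne_zero hz' t
    have := sub_ne_zero.2 hzz'
    simp only [ContinuousMap.mul_apply, ContinuousMap.smul_apply, ContinuousMap.sub_apply,
      cauchyKernel_coe, smul_eq_mul]
    field_simp
    ring

lemma star_cauchyKernel (z : ℂ) (hz : z.im ≠ 0) :
    star (cauchyKernel z hz) = cauchyKernel (starRingEnd ℂ z) (by simpa using hz) := by
  ext x
  induction x using OnePoint.rec with
  | infty => simp
  | coe t => simp

lemma dist_cauchyKernel_le {z z' : ℂ} (hz : z.im ≠ 0) (hz' : z'.im ≠ 0) :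
    dist (cauchyKernel z hz) (cauchyKernel z' hz') ≤ ‖z - z'‖ * (|z.im|⁻¹ * |z'.im|⁻¹) := by
  refine (ContinuousMap.dist_le (by positivity)).2 fun x => ?_
  induction x using OnePoint.rec with
  | infty => simpa using by positivity
  | coe t =>
    have h₁ := ofReal_sub_ne_zero hz t
    have h₂ := ofReal_sub_ne_zero hz' t
    have key : ((t : ℂ) - z)⁻¹ - ((t : ℂ) - z')⁻¹ =
        (z - z') * (((t : ℂ) - z)⁻¹ * ((t : ℂ) - z')⁻¹) := by
      field_simp
      ring
    rw [cauchyKernel_coe, cauchyKernel_coe, dist_eq_norm, key, norm_mul, norm_mul]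
    gcongr
    exacts [norm_inv_ofReal_sub_le hz t, norm_inv_ofReal_sub_le hz' t]

lemma tendsto_cauchyKernel_add_ofReal {z : ℂ} (hz : z.im ≠ 0) :
    Tendsto (fun δ : ℝ => cauchyKernel (z + δ) (by simpa using hz)) (𝓝 0)
      (𝓝 (cauchyKernel z hz)) := by
  rw [tendsto_iff_dist_tendsto_zero]
  refine squeeze_zero (fun _ => dist_nonneg) (fun δ => dist_cauchyKernel_le _ _) ?_
  simpa using (continuous_abs.tendsto' (0 : ℝ) 0 abs_zero).mul_const (|z.im|⁻¹ * |z.im|⁻¹)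

def cauchyKernels : Set C(OnePoint ℝ, ℂ) :=
  {f | ∃ z : ℂ, ∃ hz : z.im ≠ 0, f = cauchyKernel z hz}

lemma cauchyKernel_mul_mem_span {z z' : ℂ} (hz : z.im ≠ 0) (hz' : z'.im ≠ 0) (hzz' : z ≠ z') :
    cauchyKernel z hz * cauchyKernel z' hz' ∈ span ℂ cauchyKernels := by
  rw [cauchyKernel_mul_cauchyKernel hz hz' hzz']
  exact smul_mem _ _ (sub_mem (subset_span ⟨z, hz, rfl⟩) (subset_span ⟨z', hz', rfl⟩))

lemma cauchyKernel_mul_mem_topologicalClosure {z z' : ℂ} (hz : z.im ≠ 0) (hz' : z'.im ≠ 0) :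
    cauchyKernel z hz * cauchyKernel z' hz' ∈ (span ℂ cauchyKernels).topologicalClosure := by
  rcases ne_or_eq z z' with hzz' | rfl
  · exact le_topologicalClosure _ (cauchyKernel_mul_mem_span hz hz' hzz')
  refine mem_closure_of_tendsto (((tendsto_cauchyKernel_add_ofReal hz).const_mul
    (cauchyKernel z hz)).mono_left (nhdsWithin_le_nhds (s := {0}ᶜ))) ?_
  filter_upwards [self_mem_nhdsWithin] with δ (hδ : δ ≠ 0)
  refine cauchyKernel_mul_mem_span _ _ ?_
  simpa using hδ

noncomputable def closedSpanCauchyKernels : NonUnitalStarSubalgebra ℂ C(OnePoint ℝ, ℂ) :=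
  { (span ℂ cauchyKernels).topologicalClosure with
    mul_mem' := mul_mem_topologicalClosure_span <| by
      rintro _ ⟨z, hz, rfl⟩ _ ⟨z', hz', rfl⟩
      exact cauchyKernel_mul_mem_topologicalClosure hz hz'
    star_mem' := star_mem_topologicalClosure_span <| by
      rintro _ ⟨z, hz, rfl⟩
      exact ⟨_, _, star_cauchyKernel z hz⟩ }

lemma isClosed_closedSpanCauchyKernels :
    IsClosed (closedSpanCauchyKernels : Set C(OnePoint ℝ, ℂ)) :=
  isClosed_topologicalClosure _

lemma cauchyKernel_mem_closedSpanCauchyKernels (z : ℂ) (hz : z.im ≠ 0) :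
    cauchyKernel z hz ∈ closedSpanCauchyKernels :=
  le_topologicalClosure _ (subset_span ⟨z, hz, rfl⟩)

lemma apply_infty_eq_zero_of_mem_closedSpanCauchyKernels {f : C(OnePoint ℝ, ℂ)}
    (hf : f ∈ closedSpanCauchyKernels) : f ∞ = 0 := by
  have hle : (span ℂ cauchyKernels).topologicalClosure ≤
      (ContinuousMap.evalCLM ℂ (∞ : OnePoint ℝ) : C(OnePoint ℝ, ℂ) →L[ℂ] ℂ).ker := by
    refine topologicalClosure_minimal _ (span_le.2 ?_) (ContinuousLinearMap.isClosed_ker _)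
    rintro _ ⟨z, hz, rfl⟩
    simp
  exact hle hf

lemma mem_closedSpanCauchyKernels_of_apply_infty_eq_zero {g : C(OnePoint ℝ, ℂ)}
    (hg : g ∞ = 0) : g ∈ closedSpanCauchyKernels := by
  have hI : I.im ≠ 0 := by simp
  have hsep :
      (StarAlgebra.adjoin ℂ (closedSpanCauchyKernels : Set C(OnePoint ℝ, ℂ))).SeparatesPoints :=
    fun x y hxy => ⟨_, ⟨cauchyKernel I hI, StarAlgebra.subset_adjoin ℂ _
      (cauchyKernel_mem_closedSpanCauchyKernels I hI), rfl⟩, (cauchyKernel_injective I hI).ne hxy⟩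
  rw [← SetLike.mem_coe, ← isClosed_closedSpanCauchyKernels.closure_eq]
  exact ContinuousMap.mem_closure_of_apply_eq_zero _ ∞
    (fun _ => apply_infty_eq_zero_of_mem_closedSpanCauchyKernels) hsep hg

namespace OnePoint

variable {X E : Type*} [TopologicalSpace X] [NormedAddCommGroup E]
  (𝕜 : Type*) [NormedField 𝕜] [NormedSpace 𝕜 E]

noncomputable def restrictBoundedCLM : C(OnePoint X, E) →L[𝕜] X →ᵇ E :=
  LinearMap.mkContinuous
    { toFun := fun f =>
        (BoundedContinuousFunction.mkOfCompact f).compContinuous ⟨(↑), continuous_coe⟩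
      map_add' := fun _ _ => rfl
      map_smul' := fun _ _ => rfl }
    1 fun f => by
      rw [one_mul, BoundedContinuousFunction.norm_le (norm_nonneg f)]
      exact fun x => f.norm_coe_le_norm x

variable [MeasurableSpace X] [BorelSpace X] [SecondCountableTopologyEither X E]
  (p : ENNReal) [Fact (1 ≤ p)] (μ : Measure X) [IsFiniteMeasure μ]

noncomputable def toLp : C(OnePoint X, E) →L[𝕜] Lp E p μ :=
  (BoundedContinuousFunction.toLp p μ 𝕜).comp (restrictBoundedCLM 𝕜)

variable {p μ}

lemma coeFn_toLp (f : C(OnePoint X, E)) : toLp 𝕜 p μ f =ᵐ[μ] fun x : X => f x :=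
  BoundedContinuousFunction.coeFn_toLp p μ 𝕜 _

theorem dense_toLp_image_apply_infty_eq_zero [NormalSpace X] [R1Space X]
    [WeaklyLocallyCompactSpace X] [μ.Regular] [NormedSpace ℝ E] (hp : p ≠ ⊤) :
    Dense (toLp 𝕜 p μ '' {f : C(OnePoint X, E) | f (∞ : OnePoint X) = 0}) := by
  refine fun F => Metric.mem_closure_iff.2 fun ε hε => ?_
  obtain ⟨g, hg_supp, hg_approx, hg_cont, -⟩ :=
    (Lp.memLp F).exists_hasCompactSupport_eLpNorm_sub_le hp
      (ENNReal.ofReal_pos.2 (half_pos hε)).ne'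
  let G := continuousMapMk ⟨g, hg_cont⟩ 0
    (coclosedCompact_eq_cocompact (X := X) ▸ hg_supp.is_zero_at_infty)
  refine ⟨toLp 𝕜 p μ G, ⟨G, rfl, rfl⟩, ?_⟩
  rw [Lp.dist_def, eLpNorm_congr_ae (EventuallyEq.rfl.sub (coeFn_toLp 𝕜 G))]
  exact (ENNReal.toReal_le_of_le_ofReal (half_pos hε).le hg_approx).trans_lt (half_lt_self hε)

end OnePoint

/-- The linear span of the Cauchy kernels `t ↦ 1/(t - conj w)`, `w ∈ ℂ \ ℝ`,
is dense in `L²(μ)` for a positive finite measure `μ` on `ℝ`. -/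
theorem cauchy_kernels_dense (μ : Measure ℝ) [IsFiniteMeasure μ] :
    Dense (↑(Submodule.span ℂ
      {F : Lp ℂ 2 μ | ∃ w : ℂ, w.im ≠ 0 ∧
        (F : ℝ → ℂ) =ᵐ[μ] fun t : ℝ => ((t : ℂ) - (starRingEnd ℂ) w)⁻¹}) :
      Set (Lp ℂ 2 μ)) := by
  let T : C(OnePoint ℝ, ℂ) →L[ℂ] Lp ℂ 2 μ := OnePoint.toLp ℂ 2 μ
  refine dense_closure.1 <|
    (dense_toLp_image_apply_infty_eq_zero ℂ (p := 2) (μ := μ) ENNReal.ofNat_ne_top).mono ?_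
  rintro _ ⟨f, hf, rfl⟩
  have hf' : f ∈ closure (span ℂ cauchyKernels : Set C(OnePoint ℝ, ℂ)) :=
    mem_closedSpanCauchyKernels_of_apply_infty_eq_zero hf
  refine map_mem_closure T.continuous hf' fun g hg =>
    span_mono ?_ (apply_mem_span_image_of_mem_span T.toLinearMap hg)
  rintro _ ⟨_, ⟨z, hz, rfl⟩, rfl⟩
  exact ⟨starRingEnd ℂ z, by simpa using hz, by simpa using coeFn_toLp ℂ (cauchyKernel z hz)⟩
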